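/- Let ω_r^d = R_r·ω_d − ω_c − R_r·R_dᵀ·e_R^{dc} where e_R^{dc} = skew(K_R^{dc}·R_e^{dc})^∨ and R_e^{dc} = R_{dc}·R_dᵀ with R_{dc} = R_c·R_r. Then along the kinematics ω_{dc} = R_rᵀ(ω_c + ω_r^d), the Lyapunov function Ψ_{dc} = (1/2)tr(K_R^{dc}(I − R_e^{dc})) satisfies Ψ̇_{dc} = (R_dᵀe_R^{dc})ᵀ(ω_{dc} − ω_d) = −‖e_R^{dc}‖² ≤ 0. -/

import Mathlib

open Matrix

noncomputable section

/-- The special orthogonal group SO(3) as a set of real 3×3 matrices. -/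
def SO3 : Set (Matrix (Fin 3) (Fin 3) ℝ) := {R | Rᵀ * R = 1 ∧ R.det = 1}

/-- The hat map: hat(x)·y = x × y. -/
def hat (x : Fin 3 → ℝ) : Matrix (Fin 3) (Fin 3) ℝ :=
  !![0, -x 2, x 1; x 2, 0, -x 0; -x 1, x 0, 0]

/-- The vee map, inverse of hat on skew-symmetric matrices. -/
def vee (A : Matrix (Fin 3) (Fin 3) ℝ) : Fin 3 → ℝ := ![A 2 1, A 0 2, A 1 0]

/-- Skew-symmetric part of a matrix. -/
def skew (A : Matrix (Fin 3) (Fin 3) ℝ) : Matrix (Fin 3) (Fin 3) ℝ := (1/2 : ℝ) • (A - Aᵀ)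

/-- Euclidean norm on ℝ³. -/
def norm3 (x : Fin 3 → ℝ) : ℝ := Real.sqrt (∑ i, x i ^ 2)

/-- Error navigation function Ψ(R) = ½ tr(K (I − R)). -/
def Psi (K R : Matrix (Fin 3) (Fin 3) ℝ) : ℝ := (1/2) * (K * (1 - R)).trace

/-!
Along Ṙ_{dc} = R_{dc} hat ω_{dc} and Ṙ_d = R_d hat ω_d one gets
Ψ̇ = −½ tr(K R_{dc} hat(ω_{dc} − ω_d) R_dᵀ) = −½ tr(K R_e hat(R_d (ω_{dc} − ω_d))), by the
equivariance R (hat x) Rᵀ = hat(R x) on SO(3). Since tr(M hat x) = −2 vee(skew M) · x, this is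
e · R_d (ω_{dc} − ω_d) with e = e_R^{dc}. The chosen ω_r^d makes ω_{dc} − ω_d = −R_dᵀ e,
so Ψ̇ = −‖R_dᵀ e‖² = −‖e‖².
-/

section EntrywiseDerivative

variable {m n p : Type*} [Fintype n] {t : ℝ}

theorem hasDerivAt_mul_apply {A : ℝ → Matrix m n ℝ} {B : ℝ → Matrix n p ℝ}
    {A' : Matrix m n ℝ} {B' : Matrix n p ℝ}
    (hA : ∀ i j, HasDerivAt (fun s => A s i j) (A' i j) t)
    (hB : ∀ i j, HasDerivAt (fun s => B s i j) (B' i j) t) (i : m) (k : p) :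
    HasDerivAt (fun s => (A s * B s) i k) ((A' * B t + A t * B') i k) t := by
  simp only [mul_apply, Matrix.add_apply, ← Finset.sum_add_distrib]
  exact HasDerivAt.fun_sum fun j _ => (hA i j).fun_mul (hB j k)

theorem hasDerivAt_trace {A : ℝ → Matrix n n ℝ} {A' : Matrix n n ℝ}
    (hA : ∀ i j, HasDerivAt (fun s => A s i j) (A' i j) t) :
    HasDerivAt (fun s => (A s).trace) A'.trace t :=
  HasDerivAt.fun_sum fun i _ => hA i i

end EntrywiseDerivative

theorem hasDerivAt_Psi_mul_transpose (K : Matrix (Fin 3) (Fin 3) ℝ)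
    {A B : ℝ → Matrix (Fin 3) (Fin 3) ℝ} {A' B' : Matrix (Fin 3) (Fin 3) ℝ} {t : ℝ}
    (hA : ∀ i j, HasDerivAt (fun s => A s i j) (A' i j) t)
    (hB : ∀ i j, HasDerivAt (fun s => B s i j) (B' i j) t) :
    HasDerivAt (fun s => Psi K (A s * (B s)ᵀ))
      (-(1 / 2) * (K * (A' * (B t)ᵀ + A t * B'ᵀ)).trace) t := by
  have hABt := hasDerivAt_mul_apply (B := fun s => (B s)ᵀ) (B' := B'ᵀ) hA fun i j => hB j i
  have hKABt := hasDerivAt_mul_apply (A' := 0) (fun i j => hasDerivAt_const t (K i j)) hABt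
  have hPsi := ((hasDerivAt_trace hKABt).const_sub K.trace).const_mul (1 / 2 : ℝ)
  simp only [Psi, Matrix.mul_sub, Matrix.mul_one, trace_sub]
  refine hPsi.congr_deriv ?_
  rw [Matrix.zero_mul, zero_add]
  ring

theorem hat_sub (v w : Fin 3 → ℝ) : hat (v - w) = hat v - hat w := by
  ext i j; fin_cases i <;> fin_cases j <;> simp [hat] <;> ring

theorem transpose_hat (v : Fin 3 → ℝ) : (hat v)ᵀ = -hat v := by
  ext i j; fin_cases i <;> fin_cases j <;> simp [hat]

theorem trace_mul_hat (M : Matrix (Fin 3) (Fin 3) ℝ) (v : Fin 3 → ℝ) :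
    (M * hat v).trace = -2 * (vee (skew M) ⬝ᵥ v) := by
  simp only [trace, hat, diag_apply, Matrix.mul_apply, of_apply, cons_val', cons_val_fin_one,
    Fin.sum_univ_three, cons_val_zero, cons_val_one, cons_val, dotProduct, vee, skew,
    Matrix.smul_apply, Matrix.sub_apply, transpose_apply, smul_eq_mul]
  ring

-- `(adjugate R)ᵀ` is the cofactor matrix of `R`, which is `R` itself on SO(3).
theorem mul_hat_mul_transpose (R : Matrix (Fin 3) (Fin 3) ℝ) (v : Fin 3 → ℝ) :
    R * hat v * Rᵀ = hat ((adjugate R)ᵀ *ᵥ v) := by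
  ext i j
  fin_cases i <;> fin_cases j <;>
    simp [hat, adjugate_fin_three, mul_apply, mulVec, dotProduct, Fin.sum_univ_three] <;> ring

theorem adjugate_eq_transpose_of_mem_SO3 {R : Matrix (Fin 3) (Fin 3) ℝ} (hR : R ∈ SO3) :
    adjugate R = Rᵀ :=
  calc adjugate R = Rᵀ * R * adjugate R := by rw [hR.1, Matrix.one_mul]
    _ = Rᵀ := by rw [Matrix.mul_assoc, mul_adjugate, hR.2, one_smul, Matrix.mul_one]

theorem hat_mulVec_of_mem_SO3 {R : Matrix (Fin 3) (Fin 3) ℝ} (hR : R ∈ SO3) (v : Fin 3 → ℝ) :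
    hat (R *ᵥ v) = R * hat v * Rᵀ := by
  rw [mul_hat_mul_transpose, adjugate_eq_transpose_of_mem_SO3 hR, transpose_transpose]

theorem neg_half_trace_rate_eq_dotProduct (K P : Matrix (Fin 3) (Fin 3) ℝ)
    {R : Matrix (Fin 3) (Fin 3) ℝ} (hR : R ∈ SO3) (w ω : Fin 3 → ℝ) :
    -(1 / 2) * (K * (P * hat w * Rᵀ + P * (R * hat ω)ᵀ)).trace
      = (Rᵀ *ᵥ vee (skew (K * (P * Rᵀ)))) ⬝ᵥ (w - ω) := by
  have hrate : P * hat w * Rᵀ + P * (R * hat ω)ᵀ = P * Rᵀ * hat (R *ᵥ (w - ω)) :=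
    calc P * hat w * Rᵀ + P * (R * hat ω)ᵀ = P * (Rᵀ * R) * hat (w - ω) * Rᵀ := by
          rw [hR.1, transpose_mul, transpose_hat, hat_sub]; noncomm_ring
      _ = P * Rᵀ * hat (R *ᵥ (w - ω)) := by
          rw [hat_mulVec_of_mem_SO3 hR]; noncomm_ring
  rw [hrate, ← Matrix.mul_assoc, trace_mul_hat, dotProduct_mulVec, ← mulVec_transpose]
  ring

theorem transpose_mulVec_dotProduct_self {n : Type*} [Fintype n] [DecidableEq n]
    {R : Matrix n n ℝ} (hR : R * Rᵀ = 1) (v : n → ℝ) : (Rᵀ *ᵥ v) ⬝ᵥ (Rᵀ *ᵥ v) = v ⬝ᵥ v := by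
  rw [dotProduct_mulVec, ← mulVec_transpose, transpose_transpose, mulVec_mulVec, hR, one_mulVec]

theorem norm3_sq (x : Fin 3 → ℝ) : norm3 x ^ 2 = x ⬝ᵥ x := by
  rw [norm3, Real.sq_sqrt (by positivity)]
  simp only [dotProduct, sq]

theorem stmt_14_general (k₁ k₂ k₃ : ℝ)
    (Rc Rr Rd : ℝ → Matrix (Fin 3) (Fin 3) ℝ) (ωc ωd : ℝ → Fin 3 → ℝ) (t : ℝ)
    (hRr : ∀ s, Rr s ∈ SO3) (hRd : ∀ s, Rd s ∈ SO3)
    (hdRdc : ∀ s (i j : Fin 3),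
      HasDerivAt (fun u => (Rc u * Rr u) i j)
        ((Rc s * Rr s *
          hat ((Rr s)ᵀ.mulVec (ωc s +
            ((Rr s).mulVec (ωd s) - ωc s -
              (Rr s * (Rd s)ᵀ).mulVec
                (vee (skew (Matrix.diagonal ![k₁, k₂, k₃] *
                  (Rc s * Rr s * (Rd s)ᵀ)))))))) i j) s)
    (hdRd : ∀ s (i j : Fin 3), HasDerivAt (fun u => Rd u i j) ((Rd s * hat (ωd s)) i j) s) :
    HasDerivAt
        (fun s => Psi (Matrix.diagonal ![k₁, k₂, k₃]) (Rc s * Rr s * (Rd s)ᵀ))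
        (((Rd t)ᵀ.mulVec
            (vee (skew (Matrix.diagonal ![k₁, k₂, k₃] * (Rc t * Rr t * (Rd t)ᵀ)))) ⬝ᵥ
          ((Rr t)ᵀ.mulVec (ωc t +
            ((Rr t).mulVec (ωd t) - ωc t -
              (Rr t * (Rd t)ᵀ).mulVec
                (vee (skew (Matrix.diagonal ![k₁, k₂, k₃] *
                  (Rc t * Rr t * (Rd t)ᵀ)))))) - ωd t))) t ∧
      ((Rd t)ᵀ.mulVec
          (vee (skew (Matrix.diagonal ![k₁, k₂, k₃] * (Rc t * Rr t * (Rd t)ᵀ)))) ⬝ᵥ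
        ((Rr t)ᵀ.mulVec (ωc t +
          ((Rr t).mulVec (ωd t) - ωc t -
            (Rr t * (Rd t)ᵀ).mulVec
              (vee (skew (Matrix.diagonal ![k₁, k₂, k₃] *
                (Rc t * Rr t * (Rd t)ᵀ)))))) - ωd t)) =
        -(norm3 (vee (skew (Matrix.diagonal ![k₁, k₂, k₃] * (Rc t * Rr t * (Rd t)ᵀ)))) ^ 2) ∧
      -(norm3 (vee (skew (Matrix.diagonal ![k₁, k₂, k₃] * (Rc t * Rr t * (Rd t)ᵀ)))) ^ 2) ≤ 0 := by
  set K := Matrix.diagonal ![k₁, k₂, k₃]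
  set e := vee (skew (K * (Rc t * Rr t * (Rd t)ᵀ)))
  have hω : (Rr t)ᵀ *ᵥ (ωc t + (Rr t *ᵥ ωd t - ωc t - (Rr t * (Rd t)ᵀ) *ᵥ e)) - ωd t
      = -((Rd t)ᵀ *ᵥ e) := by
    rw [← add_sub_assoc, add_sub_cancel, mulVec_sub, mulVec_mulVec, mulVec_mulVec,
      ← Matrix.mul_assoc, (hRr t).1, Matrix.one_mul, one_mulVec, sub_sub_cancel_left]
  refine ⟨?_, ?_, neg_nonpos.2 (sq_nonneg _)⟩
  · exact (hasDerivAt_Psi_mul_transpose K (hdRdc t) (hdRd t)).congr_deriv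
      (neg_half_trace_rate_eq_dotProduct K _ (hRd t) _ _)
  · rw [hω, dotProduct_neg, transpose_mulVec_dotProduct_self (mul_eq_one_comm.mp (hRd t).1),
      norm3_sq]

/-- With ω_r^d = R_r ω_d − ω_c − R_r R_dᵀ e_R^{dc} and ω_{dc} = R_rᵀ(ω_c + ω_r^d), the
Lyapunov function Ψ_{dc} satisfies Ψ̇_{dc} = (R_dᵀe_R^{dc})ᵀ(ω_{dc} − ω_d) = −‖e_R^{dc}‖² ≤ 0. -/
theorem stmt_14 (k₁ k₂ k₃ : ℝ) (hk₁ : 0 < k₁) (hk₂ : 0 < k₂) (hk₃ : 0 < k₃)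
    (Rc Rr Rd : ℝ → Matrix (Fin 3) (Fin 3) ℝ) (ωc ωd : ℝ → Fin 3 → ℝ) (t : ℝ)
    (hRc : ∀ s, Rc s ∈ SO3) (hRr : ∀ s, Rr s ∈ SO3) (hRd : ∀ s, Rd s ∈ SO3)
    (hdRdc : ∀ s (i j : Fin 3),
      HasDerivAt (fun u => (Rc u * Rr u) i j)
        ((Rc s * Rr s *
          hat ((Rr s)ᵀ.mulVec (ωc s +
            ((Rr s).mulVec (ωd s) - ωc s -
              (Rr s * (Rd s)ᵀ).mulVec
                (vee (skew (Matrix.diagonal ![k₁, k₂, k₃] *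
                  (Rc s * Rr s * (Rd s)ᵀ)))))))) i j) s)
    (hdRd : ∀ s (i j : Fin 3), HasDerivAt (fun u => Rd u i j) ((Rd s * hat (ωd s)) i j) s) :
    HasDerivAt
        (fun s => Psi (Matrix.diagonal ![k₁, k₂, k₃]) (Rc s * Rr s * (Rd s)ᵀ))
        (((Rd t)ᵀ.mulVec
            (vee (skew (Matrix.diagonal ![k₁, k₂, k₃] * (Rc t * Rr t * (Rd t)ᵀ)))) ⬝ᵥ
          ((Rr t)ᵀ.mulVec (ωc t +
            ((Rr t).mulVec (ωd t) - ωc t -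
              (Rr t * (Rd t)ᵀ).mulVec
                (vee (skew (Matrix.diagonal ![k₁, k₂, k₃] *
                  (Rc t * Rr t * (Rd t)ᵀ)))))) - ωd t))) t ∧
      ((Rd t)ᵀ.mulVec
          (vee (skew (Matrix.diagonal ![k₁, k₂, k₃] * (Rc t * Rr t * (Rd t)ᵀ)))) ⬝ᵥ
        ((Rr t)ᵀ.mulVec (ωc t +
          ((Rr t).mulVec (ωd t) - ωc t -
            (Rr t * (Rd t)ᵀ).mulVec
              (vee (skew (Matrix.diagonal ![k₁, k₂, k₃] *
                (Rc t * Rr t * (Rd t)ᵀ)))))) - ωd t)) =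
        -(norm3 (vee (skew (Matrix.diagonal ![k₁, k₂, k₃] * (Rc t * Rr t * (Rd t)ᵀ)))) ^ 2) ∧
      -(norm3 (vee (skew (Matrix.diagonal ![k₁, k₂, k₃] * (Rc t * Rr t * (Rd t)ᵀ)))) ^ 2) ≤ 0 :=
  stmt_14_general k₁ k₂ k₃ Rc Rr Rd ωc ωd t hRr hRd hdRdc hdRd
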